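/- arXiv:2301.05416 — 2 statements merged into one kernel-verified Lean document; each statement's English description precedes it below -/
import Mathlib

section
/- The spectral radius of the Turán graph T(n,r) equals (1/2)(n − 2⌊n/r⌋ − 1 + √((n+1)² − 4(n − r⌊n/r⌋)⌈n/r⌉)), and this is at most n − ⌊n/r⌋, with equality if and only if r divides n (i.e., T(n,r) is regular). -/
attribute [local instance] Classical.propDecidable

/-- The spectral radius (largest eigenvalue) of a real symmetric matrix,
as the supremum of its real spectrum. -/
noncomputable def specRad {V : Type*} [Fintype V] [DecidableEq V] (A : Matrix V V ℝ) : ℝ :=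
  sSup (spectrum ℝ A)

/-!
`T(n,r)` is complete multipartite, with `n % r` parts of size `q + 1` and `r - n % r` parts of
size `q = n / r`. For a complete multipartite graph with part sizes `c_P`, the positive vector
`x v = 1 / (ρ + c_{P(v)})` is an eigenvector for `ρ` as soon as `∑_P c_P / (ρ + c_P) = 1`; for
`T(n,r)` this secular equation reduces to `ρ² = (n - 2q - 1) ρ + (r - 1) q (q + 1)`, whose
nonnegative root is the stated formula. A positive eigenvector of a nonnegative matrix belongs to
its spectral radius, so this root is `ρ(T(n,r))`. Finally the radicand is
`(n + 1)² - 4 (n % r) ⌈n/r⌉`, so `ρ ≤ n - q` with equality exactly when `r ∣ n`.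
-/

open Finset Matrix

namespace Matrix

variable {V : Type*} [Fintype V] [DecidableEq V]

theorem mem_spectrum_iff_exists_mulVec_eq_smul (A : Matrix V V ℝ) (μ : ℝ) :
    μ ∈ spectrum ℝ A ↔ ∃ v ≠ 0, A *ᵥ v = μ • v := by
  rw [spectrum.mem_iff, isUnit_iff_isUnit_det, isUnit_iff_ne_zero, not_not,
    ← exists_mulVec_eq_zero_iff]
  have key (v : V → ℝ) : (algebraMap ℝ (Matrix V V ℝ) μ - A) *ᵥ v = μ • v - A *ᵥ v := by
    rw [sub_mulVec, Algebra.algebraMap_eq_smul_one, smul_mulVec, one_mulVec]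
  simp only [key, sub_eq_zero, eq_comm]

/-- Scale `x` to the smallest multiple `t • x` dominating `|y|`; at a coordinate `i` where they
meet, `|μ| t x i = |(A *ᵥ y) i| ≤ t (A *ᵥ x) i = ρ t x i`. -/
theorem abs_le_of_mem_spectrum_of_pos_eigenvector {A : Matrix V V ℝ} (hA : ∀ i j, 0 ≤ A i j)
    {x : V → ℝ} (hx : ∀ i, 0 < x i) {ρ : ℝ} (hAx : A *ᵥ x = ρ • x) {μ : ℝ}
    (hμ : μ ∈ spectrum ℝ A) : |μ| ≤ ρ := by
  obtain ⟨y, hy, hAy⟩ := (mem_spectrum_iff_exists_mulVec_eq_smul A μ).mp hμ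
  obtain ⟨w, hw⟩ := Function.ne_iff.mp hy
  obtain ⟨i, -, hi⟩ := exists_max_image univ (fun j => |y j| / x j) ⟨w, mem_univ w⟩
  set t := |y i| / x i
  have hy_le : ∀ j, |y j| ≤ t * x j := fun j => by
    simpa [div_le_iff₀ (hx j)] using hi j (mem_univ j)
  have ht : 0 < t := pos_of_mul_pos_left ((abs_pos.mpr hw).trans_le (hy_le w)) (hx w).le
  have hti : t * x i = |y i| := div_mul_cancel₀ _ (hx i).ne'
  have key : |μ| * (t * x i) ≤ ρ * (t * x i) := calc
    |μ| * (t * x i) = |(A *ᵥ y) i| := by rw [hti, hAy, Pi.smul_apply, smul_eq_mul, abs_mul]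
    _ ≤ ∑ j, A i j * |y j| := by
      simpa only [mulVec, dotProduct, abs_mul, abs_of_nonneg (hA i _)] using
        abs_sum_le_sum_abs (fun j => A i j * y j) univ
    _ ≤ ∑ j, A i j * (t * x j) := by gcongr with j; exacts [hA i j, hy_le j]
    _ = t * (A *ᵥ x) i := by
      simp only [mulVec, dotProduct, mul_sum]
      exact sum_congr rfl fun j _ => by ring
    _ = ρ * (t * x i) := by rw [hAx, Pi.smul_apply, smul_eq_mul]; ring
  exact le_of_mul_le_mul_right key (mul_pos ht (hx i))

end Matrix

theorem specRad_eq_of_pos_eigenvector {V : Type*} [Fintype V] [DecidableEq V] [Nonempty V]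
    {A : Matrix V V ℝ} (hA : ∀ i j, 0 ≤ A i j) {x : V → ℝ} (hx : ∀ i, 0 < x i) {ρ : ℝ}
    (hAx : A *ᵥ x = ρ • x) : specRad A = ρ := by
  have hρ : ρ ∈ spectrum ℝ A := (Matrix.mem_spectrum_iff_exists_mulVec_eq_smul A ρ).mpr
    ⟨x, fun h => (hx (Classical.arbitrary V)).ne' (congrFun h _), hAx⟩
  have hle : ∀ μ ∈ spectrum ℝ A, μ ≤ ρ := fun μ hμ =>
    (le_abs_self μ).trans (Matrix.abs_le_of_mem_spectrum_of_pos_eigenvector hA hx hAx hμ)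
  exact le_antisymm (csSup_le ⟨ρ, hρ⟩ hle) (le_csSup ⟨ρ, hle⟩ hρ)

theorem add_card_filter_apply_eq_pos {V ι : Type*} [Fintype V] [DecidableEq ι] {f : V → ι}
    {ρ : ℝ} (hρ : 0 ≤ ρ) (v : V) : 0 < ρ + #{u | f u = f v} :=
  add_pos_of_nonneg_of_pos hρ <|
    Nat.cast_pos.mpr (card_pos.mpr ⟨v, mem_filter.mpr ⟨mem_univ v, rfl⟩⟩)

namespace SimpleGraph

variable {V ι : Type*} [Fintype V] [DecidableEq ι] {G : SimpleGraph V}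
  [DecidableRel G.Adj]

/-- `(A *ᵥ x) v = ∑ x - c x v = 1 - c / (ρ + c) = ρ x v`, where `c` is the size of the part
of `v`. -/
theorem adjMatrix_mulVec_eq_smul_of_adj_iff_ne {f : V → ι}
    (hG : ∀ u v, G.Adj u v ↔ f u ≠ f v) {ρ : ℝ} (hρ : 0 ≤ ρ)
    (hsum : ∑ v, (ρ + #{u | f u = f v})⁻¹ = 1) :
    G.adjMatrix ℝ *ᵥ (fun v => (ρ + #{u | f u = f v})⁻¹) =
      ρ • fun v => (ρ + #{u | f u = f v})⁻¹ := by
  ext v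
  rw [adjMatrix_mulVec_apply, Pi.smul_apply, smul_eq_mul]
  set c : ℝ := ((#{u | f u = f v} : ℕ) : ℝ)
  have hpart : ∑ u ∈ {u | f u = f v}, (ρ + #{w | f w = f u})⁻¹ = c * (ρ + c)⁻¹ := by
    rw [sum_congr rfl fun u hu => by rw [(mem_filter.mp hu).2], sum_const, nsmul_eq_mul]
  have hc : 0 < ρ + c := add_card_filter_apply_eq_pos hρ v
  have hnbr : G.neighborFinset v = ({u | ¬ f u = f v} : Finset V) := by
    ext u; simp [hG, eq_comm]
  have hsplit := sum_filter_add_sum_filter_not univ (fun u => f u = f v)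
    fun u => (ρ + #{w | f w = f u})⁻¹
  rw [hsum, hpart] at hsplit
  rw [hnbr, eq_sub_of_add_eq' hsplit]
  field_simp
  ring

end SimpleGraph

theorem Fin.card_filter_val_mod_eq {n r : ℕ} (hr : 0 < r) (i : ℕ) :
    #{u : Fin n | (u : ℕ) % r = i % r} = n / r + if i % r < n % r then 1 else 0 := by
  rw [← Nat.count_modEq_card n hr i, Nat.count_eq_card_filter_range, card_filter, card_filter,
    ← Fin.sum_univ_eq_sum_range (fun k => if k ≡ i [MOD r] then 1 else 0)]
  rfl

theorem Fin.sum_univ_val_mod_eq {M : Type*} [AddCommMonoid M] {n r : ℕ} (hr : 0 < r)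
    (F : ℕ → M) :
    ∑ v : Fin n, F (v % r) =
      ∑ i ∈ range r, (n / r + if i < n % r then 1 else 0) • F i := by
  rw [← sum_fiberwise_of_maps_to (g := fun v : Fin n => (v : ℕ) % r) (t := range r)
    fun v _ => mem_range.mpr (Nat.mod_lt _ hr)]
  refine sum_congr rfl fun i hi => ?_
  have hcard := Fin.card_filter_val_mod_eq (n := n) hr i
  rw [Nat.mod_eq_of_lt (mem_range.mp hi)] at hcard
  rw [sum_congr rfl fun v hv => by rw [(mem_filter.mp hv).2], Finset.sum_const, hcard]

noncomputable def turanDiscr (n r : ℕ) : ℝ :=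
  ((n : ℝ) + 1) ^ 2 - 4 * ((n : ℝ) - (r : ℝ) * (n / r : ℕ)) * (⌈(n : ℝ) / (r : ℝ)⌉₊ : ℝ)

noncomputable def turanRoot (n r : ℕ) : ℝ :=
  ((n : ℝ) - 2 * (n / r : ℕ) - 1 + Real.sqrt (turanDiscr n r)) / 2

theorem Nat.ceil_div_eq_div_add_one_of_not_dvd {n r : ℕ} (hr : 0 < r) (h : ¬ r ∣ n) :
    ⌈(n : ℝ) / r⌉₊ = n / r + 1 := by
  have hs : 0 < n % r := Nat.pos_of_ne_zero fun h' => h (Nat.dvd_of_mod_eq_zero h')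
  have hn := Nat.div_add_mod n r
  have hsr := Nat.mod_lt n hr
  rw [Nat.ceil_eq_iff (Nat.add_one_ne_zero _), Nat.add_sub_cancel, lt_div_iff₀ (by positivity),
    div_le_iff₀ (by positivity)]
  constructor <;> norm_cast <;> nlinarith

section turanRoot

variable {n r : ℕ}

theorem turanDiscr_eq (hr : 0 < r) :
    turanDiscr n r = ((n : ℝ) - 2 * (n / r : ℕ) - 1) ^ 2 +
      4 * ((r : ℝ) - 1) * (n / r : ℕ) * ((n / r : ℕ) + 1) := by
  rw [turanDiscr]
  by_cases hdvd : r ∣ n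
  · have hn : (n : ℝ) - r * (n / r : ℕ) = 0 := by
      rw [sub_eq_zero]; exact_mod_cast (Nat.mul_div_cancel' hdvd).symm
    linear_combination (-4 * ((⌈(n : ℝ) / r⌉₊ : ℝ) - (n / r : ℕ) - 1)) * hn
  · rw [Nat.ceil_div_eq_div_add_one_of_not_dvd hr hdvd, Nat.cast_add, Nat.cast_one]
    ring

theorem sq_le_turanDiscr (hr : 0 < r) :
    ((n : ℝ) - 2 * (n / r : ℕ) - 1) ^ 2 ≤ turanDiscr n r := by
  have : (1 : ℝ) ≤ r := by exact_mod_cast hr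
  have : 0 ≤ (r : ℝ) - 1 := by linarith
  rw [turanDiscr_eq hr]
  exact le_add_of_nonneg_right (by positivity)

theorem turanDiscr_le : turanDiscr n r ≤ ((n : ℝ) + 1) ^ 2 := by
  have : 0 ≤ (n : ℝ) - r * (n / r : ℕ) :=
    sub_nonneg.mpr (by exact_mod_cast Nat.mul_div_le n r)
  rw [turanDiscr, sub_le_self_iff]
  positivity

theorem turanDiscr_eq_sq_iff (hr : 0 < r) : turanDiscr n r = ((n : ℝ) + 1) ^ 2 ↔ r ∣ n := by
  have hn : (n : ℝ) - r * (n / r : ℕ) = (n % r : ℕ) := by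
    rw [sub_eq_iff_eq_add']; exact_mod_cast (Nat.div_add_mod n r).symm
  rw [turanDiscr, hn, sub_eq_self]
  constructor
  · intro h
    by_contra hdvd
    have hs : n % r ≠ 0 := fun h' => hdvd (Nat.dvd_of_mod_eq_zero h')
    rw [Nat.ceil_div_eq_div_add_one_of_not_dvd hr hdvd] at h
    exact mul_ne_zero (mul_ne_zero four_ne_zero (Nat.cast_ne_zero.mpr hs))
      (Nat.cast_ne_zero.mpr (Nat.succ_ne_zero _)) h
  · intro h
    simp [Nat.mod_eq_zero_of_dvd h]

theorem turanRoot_nonneg (hr : 0 < r) : 0 ≤ turanRoot n r := by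
  have := Real.abs_le_sqrt (sq_le_turanDiscr (n := n) hr)
  rw [turanRoot]
  linarith [neg_abs_le ((n : ℝ) - 2 * (n / r : ℕ) - 1)]

theorem turanRoot_sq (hr : 0 < r) :
    turanRoot n r ^ 2 = ((n : ℝ) - 2 * (n / r : ℕ) - 1) * turanRoot n r +
      ((r : ℝ) - 1) * (n / r : ℕ) * ((n / r : ℕ) + 1) := by
  have := Real.sq_sqrt ((sq_nonneg _).trans (sq_le_turanDiscr (n := n) hr))
  rw [turanDiscr_eq hr] at this
  rw [turanRoot, turanDiscr_eq hr]
  linear_combination (1 / 4 : ℝ) * this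

theorem turanRoot_secular_eq (hr : 0 < r) (hrn : r ≤ n) :
    ((n % r : ℕ) : ℝ) * (((n / r : ℕ) + 1) / (turanRoot n r + (n / r : ℕ) + 1)) +
      (r - n % r : ℕ) * ((n / r : ℕ) / (turanRoot n r + (n / r : ℕ))) = 1 := by
  have hρ := turanRoot_nonneg (n := n) hr
  have hq : (1 : ℝ) ≤ (n / r : ℕ) := by exact_mod_cast (Nat.one_le_div_iff hr).mpr hrn
  have hn : (r : ℝ) * (n / r : ℕ) + (n % r : ℕ) = n := by exact_mod_cast Nat.div_add_mod n r
  rw [Nat.cast_sub (Nat.mod_lt n hr).le]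
  field_simp
  linear_combination (-1 : ℝ) * turanRoot_sq (n := n) hr + turanRoot n r * hn

theorem turanRoot_le : turanRoot n r ≤ n - (n / r : ℕ) := by
  have := Real.sqrt_le_sqrt (turanDiscr_le (n := n) (r := r))
  rw [Real.sqrt_sq (by positivity)] at this
  rw [turanRoot]
  linarith

theorem turanRoot_eq_iff (hr : 0 < r) : turanRoot n r = n - (n / r : ℕ) ↔ r ∣ n := by
  rw [← turanDiscr_eq_sq_iff hr,
    ← Real.sqrt_eq_iff_eq_sq ((sq_nonneg _).trans (sq_le_turanDiscr hr)) (by positivity),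
    turanRoot]
  constructor <;> intro h <;> linarith

end turanRoot

namespace SimpleGraph

variable {n r : ℕ}

theorem sum_inv_turanRoot_add_card (hr : 0 < r) (hrn : r ≤ n) :
    ∑ v : Fin n, (turanRoot n r + #{u : Fin n | (u : ℕ) % r = v % r})⁻¹ = 1 := by
  set ρ := turanRoot n r
  set q := n / r
  set s := n % r
  have hsr : s ≤ r := (Nat.mod_lt n hr).le
  simp_rw [Fin.card_filter_val_mod_eq hr]
  rw [Fin.sum_univ_val_mod_eq hr (fun i => (ρ + ((q + if i < s then 1 else 0 : ℕ) : ℝ))⁻¹),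
    ← sum_range_add_sum_Ico _ hsr, ← turanRoot_secular_eq hr hrn]
  congr 1
  · rw [sum_congr rfl fun i hi => by rw [if_pos (mem_range.mp hi)], sum_const, card_range]
    push_cast; ring
  · rw [sum_congr rfl fun i hi => by rw [if_neg (not_lt.mpr (mem_Ico.mp hi).1)], sum_const,
      Nat.card_Ico]
    push_cast; ring

theorem specRad_turanGraph (hr : 0 < r) (hrn : r ≤ n) :
    specRad ((turanGraph n r).adjMatrix ℝ) = turanRoot n r :=
  have : Nonempty (Fin n) := ⟨⟨0, hr.trans_le hrn⟩⟩
  specRad_eq_of_pos_eigenvector (fun _ _ => by rw [adjMatrix_apply]; positivity)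
    (fun v => inv_pos.mpr (add_card_filter_apply_eq_pos (turanRoot_nonneg hr) v))
    (adjMatrix_mulVec_eq_smul_of_adj_iff_ne (fun _ _ => turanGraph_adj) (turanRoot_nonneg hr)
      (sum_inv_turanRoot_add_card hr hrn))

end SimpleGraph

/-- The spectral radius of the Turán graph `T(n,r)` equals
`(n − 2⌊n/r⌋ − 1 + √((n+1)² − 4(n − r⌊n/r⌋)⌈n/r⌉))/2`; it is at most `n − ⌊n/r⌋`,
with equality iff `r ∣ n` (i.e. `T(n,r)` is regular). -/
theorem stmt_15 (n r : ℕ) (hr : 1 ≤ r) (hrn : r ≤ n) :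
    specRad ((SimpleGraph.turanGraph n r).adjMatrix ℝ) =
      ((n : ℝ) - 2 * (n / r : ℕ) - 1 +
        Real.sqrt (((n : ℝ) + 1) ^ 2 -
          4 * ((n : ℝ) - (r : ℝ) * (n / r : ℕ)) * (⌈(n : ℝ) / (r : ℝ)⌉₊ : ℝ))) / 2 ∧
    specRad ((SimpleGraph.turanGraph n r).adjMatrix ℝ) ≤ (n : ℝ) - (n / r : ℕ) ∧
      (specRad ((SimpleGraph.turanGraph n r).adjMatrix ℝ) = (n : ℝ) - (n / r : ℕ) ↔
        r ∣ n) := by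
  rw [SimpleGraph.specRad_turanGraph hr hrn]
  exact ⟨rfl, turanRoot_le, turanRoot_eq_iff hr⟩
end

section
/- Let F₂ be the graph obtained from the 5-vertex reduced graph G₁ (with edges v₁v₂, v₁v₃, v₁v₄, v₂v₄, v₃v₅) by multiplication of vertices with multiplicities (1,1,1,2,n−5), and F₁ the same with multiplicities (1,1,1,1,n−4). Then for n ≥ 19, ρ(F₁) > ρ(F₂). -/
/-!
Let `μ = ρ(F₂)` with eigenvector `y`. As `μ ≠ 0`, `y` is constant on the classes of the blow-up,
and its class values `t` solve the quotient equations `μ tᵢ = ∑ⱼ A(G₁)ᵢⱼ nⱼ tⱼ`. `F₁` arises from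
`F₂` by moving one vertex from the class of `v₄` to that of `v₅`, and the Rayleigh quotient of `F₁`
at the lift `x` of `t` equals `μ + μ (t₅² - t₄²) / ‖x‖²`. Eliminating `t₁, t₂, t₃` from the quotient
equations gives `(μ³ - 5μ - 4) t₄ = μ (μ + 1) t₅`, so `|t₄| < |t₅|` as soon as `μ ≥ 7/2`; the
test vector `(0, 0, 4, 0, 1)` on the classes gives `μ (16 + n - 5) ≥ 8 (n - 5)`, hence `μ ≥ 7/2`.
In the code vertices are 0-indexed, so `t₄, t₅` are `t 3, t 4`.
-/
attribute [local instance] Classical.propDecidable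

/-- Multiplication of vertices: `G ∘ (n₁,…,n_k)`. -/
def blowup {k : ℕ} (G : SimpleGraph (Fin k)) (n : Fin k → ℕ) :
    SimpleGraph (Σ i, Fin (n i)) :=
  G.comap Sigma.fst

/-- The reduced graph `G₁` on `{v₁,…,v₅}` with edges
`v₁v₂, v₁v₃, v₁v₄, v₂v₄, v₃v₅` (0-indexed). -/
def G₁ : SimpleGraph (Fin 5) :=
  SimpleGraph.fromEdgeSet
    {Sym2.mk 0 1, Sym2.mk 0 2, Sym2.mk 0 3, Sym2.mk 1 3, Sym2.mk 2 4}

open Matrix Finset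

section Spectral

variable {V : Type*} [Fintype V] [DecidableEq V] {A : Matrix V V ℝ}

lemma le_specRad {μ : ℝ} (hμ : μ ∈ spectrum ℝ A) : μ ≤ specRad A :=
  le_csSup A.finite_spectrum.bddAbove hμ

lemma Matrix.IsHermitian.specRad_mem_spectrum [Nonempty V] (hA : A.IsHermitian) :
    specRad A ∈ spectrum ℝ A := by
  rw [specRad, hA.spectrum_real_eq_range_eigenvalues]
  exact (Set.range_nonempty _).csSup_mem (Set.finite_range _)

lemma Matrix.IsHermitian.exists_mulVec_eq_specRad_smul [Nonempty V] (hA : A.IsHermitian) :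
    ∃ v ≠ 0, A *ᵥ v = specRad A • v := by
  have h := hA.specRad_mem_spectrum
  rw [← Matrix.spectrum_toLin', ← Module.End.hasEigenvalue_iff_mem_spectrum] at h
  obtain ⟨v, hv⟩ := h.exists_hasEigenvector
  exact ⟨v, hv.2, by simpa using hv.apply_eq_smul⟩

open scoped MatrixOrder in
lemma Matrix.IsHermitian.dotProduct_mulVec_le_specRad_mul (hA : A.IsHermitian) (x : V → ℝ) :
    x ⬝ᵥ (A *ᵥ x) ≤ specRad A * (x ⬝ᵥ x) := by
  have h : A ≤ algebraMap ℝ _ (specRad A) :=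
    le_algebraMap_of_spectrum_le (fun _ => le_specRad) hA.isSelfAdjoint
  simpa [sub_mulVec, Algebra.algebraMap_eq_smul_one, smul_mulVec] using
    (le_iff.mp h).dotProduct_mulVec_nonneg x

end Spectral

section Blowup

variable {α : Type*} {k : ℕ} {G : SimpleGraph (Fin k)} {ns : Fin k → ℕ}

lemma blowup_adjMatrix_apply [Zero α] [One α] (u v : Σ i, Fin (ns i)) :
    (blowup G ns).adjMatrix α u v = G.adjMatrix α u.1 v.1 := rfl

lemma blowup_adjMatrix_mulVec_apply [NonAssocSemiring α] (y : (Σ i, Fin (ns i)) → α)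
    (u : Σ i, Fin (ns i)) :
    ((blowup G ns).adjMatrix α *ᵥ y) u = (G.adjMatrix α *ᵥ fun j => ∑ q, y ⟨j, q⟩) u.1 := by
  simp only [mulVec, dotProduct, ← univ_sigma_univ, sum_sigma, blowup_adjMatrix_apply, mul_sum]

lemma sum_comp_fst [NonAssocSemiring α] (t : Fin k → α) (j : Fin k) :
    ∑ q : Fin (ns j), (t ∘ Sigma.fst : (Σ i, Fin (ns i)) → α) ⟨j, q⟩ = ns j * t j := by
  simp [nsmul_eq_mul]

lemma blowup_adjMatrix_mulVec_comp_fst [NonAssocSemiring α] (t : Fin k → α) :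
    (blowup G ns).adjMatrix α *ᵥ (t ∘ Sigma.fst) =
      (G.adjMatrix α *ᵥ fun j => ns j * t j) ∘ Sigma.fst := by
  ext u
  simp only [blowup_adjMatrix_mulVec_apply, sum_comp_fst]
  rfl

lemma comp_fst_dotProduct_comp_fst [NonAssocSemiring α] (s t : Fin k → α) :
    (s ∘ Sigma.fst : (Σ i, Fin (ns i)) → α) ⬝ᵥ (t ∘ Sigma.fst) = ∑ i, ns i * (s i * t i) := by
  simp [dotProduct, ← univ_sigma_univ, sum_sigma, nsmul_eq_mul]

lemma exists_eq_comp_fst_of_blowup_mulVec_eq_smul {K : Type*} [Field K]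
    {y : (Σ i, Fin (ns i)) → K} {μ : K} (hμ : μ ≠ 0)
    (hy : (blowup G ns).adjMatrix K *ᵥ y = μ • y) :
    ∃ t : Fin k → K, y = t ∘ Sigma.fst ∧ μ • t = G.adjMatrix K *ᵥ fun j => ns j * t j := by
  set t : Fin k → K := μ⁻¹ • G.adjMatrix K *ᵥ fun j => ∑ q, y ⟨j, q⟩ with ht
  have hyt : y = t ∘ Sigma.fst := by
    ext u
    rw [ht, Function.comp_apply, Pi.smul_apply, ← blowup_adjMatrix_mulVec_apply, hy, Pi.smul_apply,
      inv_smul_smul₀ hμ]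
  refine ⟨t, hyt, ?_⟩
  have hsum : (fun j => ∑ q, y ⟨j, q⟩) = fun j => (ns j : K) * t j := by
    ext j; rw [hyt, sum_comp_fst]
  rw [← hsum, smul_inv_smul₀ hμ]

end Blowup

lemma G₁_adjMatrix_mulVec {α : Type*} [NonAssocSemiring α] (w : Fin 5 → α) :
    G₁.adjMatrix α *ᵥ w = ![w 1 + w 2 + w 3, w 0 + w 3, w 0 + w 4, w 0 + w 1, w 2] := by
  ext i
  simp only [mulVec, dotProduct, Fin.sum_univ_five, SimpleGraph.adjMatrix_apply]
  fin_cases i <;> simp [G₁]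

lemma G₁_blowup_quadForm_le_specRad_mul (ns : Fin 5 → ℕ) (t : Fin 5 → ℝ) :
    2 * (ns 0 * ns 1 * (t 0 * t 1) + ns 0 * ns 2 * (t 0 * t 2) + ns 0 * ns 3 * (t 0 * t 3) +
        ns 1 * ns 3 * (t 1 * t 3) + ns 2 * ns 4 * (t 2 * t 4)) ≤
      specRad ((blowup G₁ ns).adjMatrix ℝ) *
        (ns 0 * t 0 ^ 2 + ns 1 * t 1 ^ 2 + ns 2 * t 2 ^ 2 + ns 3 * t 3 ^ 2 + ns 4 * t 4 ^ 2) := by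
  have h :=
    ((blowup G₁ ns).isHermitian_adjMatrix ℝ).dotProduct_mulVec_le_specRad_mul (t ∘ Sigma.fst)
  rw [blowup_adjMatrix_mulVec_comp_fst, comp_fst_dotProduct_comp_fst, comp_fst_dotProduct_comp_fst,
    G₁_adjMatrix_mulVec] at h
  simp only [Fin.isValue, Fin.sum_univ_five, cons_val_zero, cons_val_one, Matrix.cons_val] at h
  linarith

lemma seven_halves_le_specRad_G₁_blowup {m : ℕ} (hm : 13 ≤ m) :
    7 / 2 ≤ specRad ((blowup G₁ ![1, 1, 1, 2, m]).adjMatrix ℝ) := by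
  have h := G₁_blowup_quadForm_le_specRad_mul ![1, 1, 1, 2, m] ![0, 0, 4, 0, 1]
  have hm' : (13 : ℝ) ≤ m := by exact_mod_cast hm
  simp only [Fin.isValue, cons_val_zero, cons_val_one, Matrix.cons_val, Nat.cast_one,
    Nat.cast_ofNat, mul_one, mul_zero, zero_mul, one_mul, add_zero, zero_add, ne_eq,
    OfNat.ofNat_ne_zero, not_false_eq_true, zero_pow, one_pow] at h
  nlinarith

section Quotient

variable {μ m : ℝ} {t : Fin 5 → ℝ}

lemma sq_lt_sq_of_G₁_quotient (hμ : 7 / 2 ≤ μ) (ht : t ≠ 0)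
    (h : μ • t = ![t 1 + t 2 + 2 * t 3, t 0 + 2 * t 3, t 0 + m * t 4, t 0 + t 1, t 2]) :
    t 3 ^ 2 < t 4 ^ 2 := by
  obtain ⟨e0, e1, -, e3, e4⟩ := by simpa [funext_iff, Fin.forall_fin_succ] using h
  have hP : μ * (μ + 1) < μ ^ 3 - 5 * μ - 4 := by
    nlinarith [mul_nonneg (sub_nonneg.2 hμ) (sub_nonneg.2 hμ)]
  set P := μ ^ 3 - 5 * μ - 4
  have hP0 : P * t 0 = μ * (μ ^ 2 - 2) * t 4 := by
    linear_combination (μ ^ 2 - 2) * e0 + (μ + 2) * e1 + (2 * μ + 2) * e3 - (μ ^ 2 - 2) * e4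
  have hP3 : P * t 3 = μ * (μ + 1) * t 4 := by
    refine mul_left_cancel₀ (show μ ^ 2 - 2 ≠ 0 by nlinarith) ?_
    linear_combination P * (μ * e3 + e1) + (μ + 1) * hP0
  have ht4 : t 4 ≠ 0 := by
    intro h4
    have hPne : P ≠ 0 := by nlinarith
    have h0 : t 0 = 0 := by simpa [h4, hPne] using hP0
    have h3 : t 3 = 0 := by simpa [h4, hPne] using hP3
    have h2 : t 2 = 0 := by rw [← e4, h4, mul_zero]
    have h1 : t 1 = 0 := by linear_combination -e3 + μ * h3 - h0
    exact ht (funext fun i => by fin_cases i <;> assumption)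
  have key : P ^ 2 * t 3 ^ 2 < P ^ 2 * t 4 ^ 2 := by
    rw [← mul_pow, hP3, mul_pow]
    gcongr
  exact lt_of_mul_lt_mul_left key (sq_nonneg P)

lemma mul_lt_G₁_moved_quadForm (hμ : 7 / 2 ≤ μ) (ht : t ≠ 0)
    (h : μ • t = ![t 1 + t 2 + 2 * t 3, t 0 + 2 * t 3, t 0 + m * t 4, t 0 + t 1, t 2]) :
    μ * (t 0 ^ 2 + t 1 ^ 2 + t 2 ^ 2 + t 3 ^ 2 + (m + 1) * t 4 ^ 2) <
      2 * (t 0 * t 1 + t 0 * t 2 + t 0 * t 3 + t 1 * t 3 + (m + 1) * (t 2 * t 4)) := by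
  have hgain : 0 < μ * (t 4 ^ 2 - t 3 ^ 2) :=
    mul_pos (by linarith) (sub_pos.2 (sq_lt_sq_of_G₁_quotient hμ ht h))
  obtain ⟨e0, e1, e2, -, e4⟩ := by simpa [funext_iff, Fin.forall_fin_succ] using h
  linear_combination hgain + t 0 * e0 + t 1 * e1 + t 2 * e2 + (m + 2) * t 4 * e4

end Quotient

/-- For `n ≥ 19`, `ρ(G₁∘(1,1,1,1,n−4)) > ρ(G₁∘(1,1,1,2,n−5))`. -/
theorem stmt_18 (n : ℕ) (hn : 19 ≤ n) :
    specRad ((blowup G₁ ![1, 1, 1, 2, n - 5]).adjMatrix ℝ) <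
      specRad ((blowup G₁ ![1, 1, 1, 1, n - 4]).adjMatrix ℝ) := by
  obtain ⟨m, rfl⟩ : ∃ m, n = m + 5 := ⟨n - 5, by omega⟩
  rw [Nat.add_sub_cancel, show m + 5 - 4 = m + 1 by omega]
  have hμ := seven_halves_le_specRad_G₁_blowup (show 13 ≤ m by omega)
  have : Nonempty (Σ i, Fin (![1, 1, 1, 2, m] i)) := ⟨⟨0, 0, by simp⟩⟩
  obtain ⟨y, hy0, hy⟩ :=
    ((blowup G₁ ![1, 1, 1, 2, m]).isHermitian_adjMatrix ℝ).exists_mulVec_eq_specRad_smul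
  obtain ⟨t, rfl, ht⟩ := exists_eq_comp_fst_of_blowup_mulVec_eq_smul (by positivity) hy
  rw [G₁_adjMatrix_mulVec] at ht
  simp only [Fin.isValue, cons_val_zero, cons_val_one, Matrix.cons_val, Nat.cast_one,
    Nat.cast_ofNat, one_mul] at ht
  have ht0 : t ≠ 0 := by rintro rfl; exact hy0 rfl
  have hF₁ := G₁_blowup_quadForm_le_specRad_mul ![1, 1, 1, 1, m + 1] t
  simp only [Fin.isValue, cons_val_zero, cons_val_one, Matrix.cons_val, Nat.cast_one, Nat.cast_add,
    mul_one, one_mul] at hF₁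
  exact lt_of_mul_lt_mul_right ((mul_lt_G₁_moved_quadForm hμ ht0 ht).trans_le hF₁) (by positivity)
end
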